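/- arXiv:2207.14629 — 2 statements merged into one kernel-verified Lean document; each statement's English description precedes it below -/
import Mathlib

section
/- Let R = ⊕_{k∈ℤ²} R_k be a ℤ²-graded ring, let λ, ρ ∈ ℤ², and suppose there exists a partition of unity of type (λ, −λ). Then: (a) every element of R_{λ+ρ} is a finite sum of products xy with x ∈ R_λ and y ∈ R_ρ; and (b) the multiplication map R_λ × R_ρ → R_{λ+ρ}, (x,y) ↦ xy, is a universal R_{(0,0)}-balanced map: for every abelian group M and every biadditive map f : R_λ × R_ρ → M satisfying f(xr, y) = f(x, ry) for all x ∈ R_λ, y ∈ R_ρ, r ∈ R_{(0,0)}, there exists a unique additive homomorphism g : R_{λ+ρ} → M such that g(xy) = f(x, y) for all x ∈ R_λ, y ∈ R_ρ. (Equivalently, multiplication induces an isomorphism R_λ ⊗_{R_{(0,0)}} R_ρ ≅ R_{λ+ρ} of R_{(0,0)}-bimodules.) -/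
/-!
Multiplying by the partition of unity `1 = ∑ⱼ uⱼ vⱼ` gives `z = ∑ⱼ uⱼ (vⱼ z)` with `vⱼ z ∈ R_ρ`,
which proves (a) and forces any factorisation `g` of `f` to be `g z = ∑ⱼ f (uⱼ, vⱼ z)`.
Conversely this formula does factor `f`: for `z = x y` the elements `vⱼ x` have degree `0`, so
balancedness moves them to the left, and `∑ⱼ uⱼ (vⱼ x) = x`.
-/

open SetLike

section GradedPieces

variable {ι R M : Type*} [AddGroup ι] [Ring R] [AddCommGroup M]
  {𝒜 : ι → AddSubgroup R} [GradedMul 𝒜]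

def gradedMulLeft {a : R} {i j k : ι} (ha : a ∈ 𝒜 i) (h : i + j = k) : 𝒜 j →+ 𝒜 k where
  toFun z := ⟨a * z, h ▸ mul_mem_graded ha z.2⟩
  map_zero' := by ext; simp
  map_add' _ _ := by ext; simp [mul_add]

@[simp]
lemma coe_gradedMulLeft {a : R} {i j k : ι} (ha : a ∈ 𝒜 i) (h : i + j = k) (z : 𝒜 j) :
    (gradedMulLeft ha h z : R) = a * z :=
  rfl

variable (𝒜) in
def IsBalanced {i j : ι} (B : 𝒜 i →+ 𝒜 j →+ M) : Prop :=
  ∀ (x : 𝒜 i) (y : 𝒜 j) (r : 𝒜 0) (h₁ : (x : R) * r ∈ 𝒜 i) (h₂ : (r : R) * y ∈ 𝒜 j),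
    B ⟨x * r, h₁⟩ y = B x ⟨r * y, h₂⟩

lemma sum_mul_mul_eq_self {κ : Type*} [Fintype κ] {u v : κ → R}
    (hone : ∑ j, u j * v j = 1) (z : R) : ∑ j, u j * (v j * z) = z := by
  simp_rw [← mul_assoc, ← Finset.sum_mul, hone, one_mul]

section PartitionOfUnity

variable {κ : Type*} [Fintype κ] {lam ρ : ι} {u v : κ → R}
  (hu : ∀ j, u j ∈ 𝒜 lam) (hv : ∀ j, v j ∈ 𝒜 (-lam))

lemma eq_sum_gradedMulLeft (hone : ∑ j, u j * v j = 1) {i k : ι} (h₁ : -lam + i = k)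
    (h₂ : lam + k = i) (z : 𝒜 i) :
    z = ∑ j, gradedMulLeft (hu j) h₂ (gradedMulLeft (hv j) h₁ z) := by
  ext
  simp [sum_mul_mul_eq_self hone]

def balancedLift (B : 𝒜 lam →+ 𝒜 ρ →+ M) : 𝒜 (lam + ρ) →+ M :=
  ∑ j, (B ⟨u j, hu j⟩).comp (gradedMulLeft (hv j) (neg_add_cancel_left lam ρ))

lemma balancedLift_apply_mul (hone : ∑ j, u j * v j = 1) {B : 𝒜 lam →+ 𝒜 ρ →+ M}
    (hB : IsBalanced 𝒜 B) (x : 𝒜 lam) (y : 𝒜 ρ) (hxy : (x : R) * y ∈ 𝒜 (lam + ρ)) :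
    balancedLift hu hv B ⟨x * y, hxy⟩ = B x y := by
  let r : κ → 𝒜 0 := fun j => gradedMulLeft (hv j) (neg_add_cancel lam) x
  have hxr j : u j * (r j : R) ∈ 𝒜 lam := (gradedMulLeft (hu j) (add_zero lam) (r j)).2
  have hry j : (r j : R) * y ∈ 𝒜 ρ := (gradedMulLeft (r j).2 (zero_add ρ) y).2
  calc balancedLift hu hv B ⟨x * y, hxy⟩
      = ∑ j, B ⟨u j, hu j⟩ ⟨r j * y, hry j⟩ := by
        simp only [balancedLift, AddMonoidHom.finsetSum_apply, AddMonoidHom.comp_apply]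
        refine Finset.sum_congr rfl fun j _ => congrArg _ (Subtype.ext ?_)
        simp [r, mul_assoc]
    _ = ∑ j, B ⟨u j * r j, hxr j⟩ y := Finset.sum_congr rfl fun j _ => (hB _ _ _ _ _).symm
    _ = B x y := by
        rw [← AddMonoidHom.finsetSum_apply, ← map_sum]
        congr
        exact (eq_sum_gradedMulLeft hu hv hone (neg_add_cancel lam) (add_zero lam) x).symm

lemma eq_balancedLift (hone : ∑ j, u j * v j = 1) {B : 𝒜 lam →+ 𝒜 ρ →+ M}
    (g : 𝒜 (lam + ρ) →+ M)
    (hg : ∀ (x : 𝒜 lam) (y : 𝒜 ρ) (hxy : (x : R) * y ∈ 𝒜 (lam + ρ)), g ⟨x * y, hxy⟩ = B x y) :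
    g = balancedLift hu hv B := by
  ext z
  conv_lhs => rw [eq_sum_gradedMulLeft hu hv hone (neg_add_cancel_left lam ρ) rfl z, map_sum]
  simp only [balancedLift, AddMonoidHom.finsetSum_apply, AddMonoidHom.comp_apply]
  exact Finset.sum_congr rfl fun j _ => hg ⟨u j, hu j⟩ _ _

end PartitionOfUnity

end GradedPieces

/-- Let `R` be a `ℤ²`-graded ring, `λ, ρ ∈ ℤ²`, and suppose a partition of unity
`1 = ∑ⱼ uⱼ vⱼ` of type `(λ, -λ)` exists. Then (a) every element of `R_{λ+ρ}` is a finite sum of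
products `x * y` with `x ∈ R_λ`, `y ∈ R_ρ`; and (b) the multiplication map
`R_λ × R_ρ → R_{λ+ρ}` is a universal `R_{(0,0)}`-balanced map: for every abelian group `M` and
every biadditive `R_{(0,0)}`-balanced map `f : R_λ × R_ρ → M` there is a unique additive
homomorphism `g : R_{λ+ρ} → M` with `g (x * y) = f x y` for all `x ∈ R_λ`, `y ∈ R_ρ`.
(Equivalently, multiplication induces an isomorphism `R_λ ⊗_{R_{(0,0)}} R_ρ ≅ R_{λ+ρ}`.) -/
theorem mul_is_universal_balanced_map {R : Type*} [Ring R]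
    (𝒜 : ℤ × ℤ → AddSubgroup R) [GradedRing 𝒜] (lam ρ : ℤ × ℤ)
    (n : ℕ) (u v : Fin n → R)
    (hu : ∀ j, u j ∈ 𝒜 lam) (hv : ∀ j, v j ∈ 𝒜 (-lam)) (hone : ∑ j, u j * v j = 1)
    (M : Type*) [AddCommGroup M] (f : 𝒜 lam → 𝒜 ρ → M)
    (hf_addl : ∀ (x x' : 𝒜 lam) (y : 𝒜 ρ), f (x + x') y = f x y + f x' y)
    (hf_addr : ∀ (x : 𝒜 lam) (y y' : 𝒜 ρ), f x (y + y') = f x y + f x y')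
    (hf_bal : ∀ (x : 𝒜 lam) (y : 𝒜 ρ) (r : 𝒜 (0, 0))
        (h₁ : (x : R) * (r : R) ∈ 𝒜 lam) (h₂ : (r : R) * (y : R) ∈ 𝒜 ρ),
        f ⟨(x : R) * (r : R), h₁⟩ y = f x ⟨(r : R) * (y : R), h₂⟩) :
    (∀ z ∈ 𝒜 (lam + ρ), ∃ (m : ℕ) (x y : Fin m → R),
        (∀ i, x i ∈ 𝒜 lam) ∧ (∀ i, y i ∈ 𝒜 ρ) ∧ z = ∑ i, x i * y i) ∧
    (∃! g : 𝒜 (lam + ρ) →+ M, ∀ (x : 𝒜 lam) (y : 𝒜 ρ)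
        (hxy : (x : R) * (y : R) ∈ 𝒜 (lam + ρ)),
        g ⟨(x : R) * (y : R), hxy⟩ = f x y) := by
  let B : 𝒜 lam →+ 𝒜 ρ →+ M :=
    AddMonoidHom.mk' (fun x => AddMonoidHom.mk' (f x) (hf_addr x)) fun x x' =>
      AddMonoidHom.ext (hf_addl x x')
  refine ⟨fun z hz => ?_, balancedLift hu hv B, balancedLift_apply_mul hu hv hone hf_bal,
    eq_balancedLift hu hv hone (B := B)⟩
  exact ⟨n, u, fun j => v j * z, hu,
    fun j => (gradedMulLeft (hv j) (neg_add_cancel_left lam ρ) ⟨z, hz⟩).2,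
    (sum_mul_mul_eq_self hone z).symm⟩
end

section
/- Let K be a field and let K̄ = K[a,b,c,d]/(ab+cd−1). Then every unit of K̄ is the image of a nonzero element of K under the canonical map K → K̄; that is, the unit group of K̄ equals the image of K^× = K∖{0}. -/
/-!
The hypersurface `ab + cd = 1` has the polynomial parametrization
`a = 1 + xy`, `b = 1 - xz`, `c = x`, `d = z - y + xyz`, and the induced map
`K̄ → K[x,y,z]` is injective, so every unit of `K̄` becomes a unit of a polynomial ring over
a field, i.e. a nonzero constant.

Injectivity: modulo `ab + cd - 1`, every `f` satisfies `cᴺ f ≡ g(a,b,c)` for some `N` and some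
`g`, since `cd = 1 - ab` eliminates `d`. The restriction of the parametrization to `K[a,b,c]` is
injective, because `x = c`, `y = (a - 1)/c`, `z = (1 - b)/c` inverts it over the fraction field.
Finally `c` is a nonzerodivisor modulo `ab + cd - 1`: the prime `c` does not divide
`ab + cd - 1`.
-/

open MvPolynomial

/-- The ideal `(ab + cd - 1)` of `K[a,b,c,d]`, where `a = X 0`, `b = X 1`, `c = X 2`,
`d = X 3`. -/
noncomputable def relIdeal (K : Type*) [CommRing K] : Ideal (MvPolynomial (Fin 4) K) :=
  Ideal.span {X 0 * X 1 + X 2 * X 3 - 1}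

section

variable {R : Type*} [CommRing R]

noncomputable def relPoly (R : Type*) [CommRing R] : MvPolynomial (Fin 4) R :=
  X 0 * X 1 + X 2 * X 3 - 1

theorem mem_relIdeal_iff {f : MvPolynomial (Fin 4) R} : f ∈ relIdeal R ↔ relPoly R ∣ f :=
  Ideal.mem_span_singleton

theorem relPoly_mem_relIdeal : relPoly R ∈ relIdeal R :=
  Ideal.mem_span_singleton_self _

theorem exists_X_two_pow_mul_sub_rename_mem_relIdeal (f : MvPolynomial (Fin 4) R) :
    ∃ (N : ℕ) (g : MvPolynomial (Fin 3) R),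
      X 2 ^ N * f - rename Fin.castSucc g ∈ relIdeal R := by
  simp only [← Ideal.Quotient.eq, map_mul, map_pow]
  set π := Ideal.Quotient.mk (relIdeal R)
  have hrel : π (X 0) * π (X 1) + π (X 2) * π (X 3) = 1 := by
    have h : π (relPoly R) = 0 := Ideal.Quotient.eq_zero_iff_mem.mpr relPoly_mem_relIdeal
    simpa only [relPoly, map_sub, map_add, map_mul, map_one, sub_eq_zero] using h
  induction f using MvPolynomial.induction_on with
  | C r => exact ⟨0, C r, by simp⟩
  | add p q hp hq =>
    obtain ⟨N₁, g₁, h₁⟩ := hp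
    obtain ⟨N₂, g₂, h₂⟩ := hq
    refine ⟨N₁ + N₂, X 2 ^ N₂ * g₁ + X 2 ^ N₁ * g₂, ?_⟩
    simp only [map_add, map_mul, map_pow, rename_X, show Fin.castSucc (2 : Fin 3) = 2 from rfl]
    linear_combination π (X 2) ^ N₂ * h₁ + π (X 2) ^ N₁ * h₂
  | mul_X p i hp =>
    obtain ⟨N, g, h⟩ := hp
    induction i using Fin.lastCases with
    | cast j =>
      refine ⟨N, g * X j, ?_⟩
      simp only [map_mul, rename_X]
      linear_combination π (X j.castSucc) * h
    | last =>
      refine ⟨N + 1, g * (1 - X 0 * X 1), ?_⟩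
      simp only [map_mul, map_sub, map_one, rename_X, show Fin.castSucc (0 : Fin 3) = 0 from rfl,
        show Fin.castSucc (1 : Fin 3) = 1 from rfl, show Fin.last 3 = 3 from rfl]
      linear_combination π (X 2) * π (X 3) * h + π (rename Fin.castSucc g) * hrel

theorem not_X_two_dvd_relPoly [Nontrivial R] : ¬ X 2 ∣ relPoly R := by
  rintro ⟨q, hq⟩
  simpa [relPoly] using congrArg constantCoeff hq

theorem mem_relIdeal_of_X_two_mul_mem [IsDomain R] {f : MvPolynomial (Fin 4) R}
    (h : X 2 * f ∈ relIdeal R) : f ∈ relIdeal R := by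
  obtain ⟨q, hq⟩ := mem_relIdeal_iff.mp h
  obtain ⟨q', rfl⟩ := (X_prime.dvd_or_dvd ⟨f, hq.symm⟩).resolve_left not_X_two_dvd_relPoly
  exact mem_relIdeal_iff.mpr ⟨q', mul_left_cancel₀ (X_ne_zero 2) (by rw [hq]; ring)⟩

theorem mem_relIdeal_of_X_two_pow_mul_mem [IsDomain R] {f : MvPolynomial (Fin 4) R} :
    ∀ {N : ℕ}, X 2 ^ N * f ∈ relIdeal R → f ∈ relIdeal R
  | 0, h => by simpa using h
  | N + 1, h => mem_relIdeal_of_X_two_pow_mul_mem (N := N)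
      (mem_relIdeal_of_X_two_mul_mem (by rwa [pow_succ', mul_assoc] at h))

/-- With `c = x`, `a = 1 + cy`, `b = 1 - cz`, the relation forces `d = (1 - ab)/c = z - y + xyz`. -/
noncomputable def relParam (R : Type*) [CommRing R] :
    MvPolynomial (Fin 4) R →ₐ[R] MvPolynomial (Fin 3) R :=
  aeval ![1 + X 0 * X 1, 1 - X 0 * X 2, X 0, X 2 - X 1 + X 0 * X 1 * X 2]

theorem relParam_relPoly : relParam R (relPoly R) = 0 := by
  simp only [relParam, relPoly, map_sub, map_add, map_mul, map_one, aeval_X,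
    Matrix.cons_val_zero, Matrix.cons_val_one, Matrix.cons_val]
  ring

theorem relIdeal_le_ker_relParam : relIdeal R ≤ RingHom.ker (relParam R) :=
  Ideal.span_le.mpr (Set.singleton_subset_iff.mpr relParam_relPoly)

theorem relParam_comp_rename_castSucc_injective [IsDomain R] :
    Function.Injective ((relParam R).comp (rename Fin.castSucc)) := by
  set L := FractionRing (MvPolynomial (Fin 3) R)
  set e := algebraMap (MvPolynomial (Fin 3) R) L
  have he : Function.Injective e := IsFractionRing.injective _ L
  have hc : e (X 2) ≠ 0 := (map_ne_zero_iff e he).mpr (X_ne_zero 2)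
  let ψ : MvPolynomial (Fin 3) R →ₐ[R] L :=
    aeval ![e (X 2), (e (X 0) - 1) / e (X 2), (1 - e (X 1)) / e (X 2)]
  have hleft :
      ψ.comp ((relParam R).comp (rename Fin.castSucc)) = IsScalarTower.toAlgHom R _ L := by
    ext i
    fin_cases i <;> simp [ψ, relParam, mul_div_cancel₀ _ hc, e]
  refine Function.Injective.of_comp (f := ψ) ?_
  rw [← AlgHom.coe_comp, hleft]
  exact he

theorem ker_relParam [IsDomain R] : RingHom.ker (relParam R) = relIdeal R := by
  refine le_antisymm (fun f hf => ?_) relIdeal_le_ker_relParam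
  obtain ⟨N, g, hg⟩ := exists_X_two_pow_mul_sub_rename_mem_relIdeal f
  have hg0 : g = 0 := by
    apply relParam_comp_rename_castSucc_injective
    simpa [RingHom.mem_ker.mp hf] using RingHom.mem_ker.mp (relIdeal_le_ker_relParam hg)
  rw [hg0, map_zero, sub_zero] at hg
  exact mem_relIdeal_of_X_two_pow_mul_mem hg

noncomputable def relParamQuot (R : Type*) [CommRing R] :
    (MvPolynomial (Fin 4) R ⧸ relIdeal R) →ₐ[R] MvPolynomial (Fin 3) R :=
  Ideal.Quotient.liftₐ _ (relParam R) fun _ h => relIdeal_le_ker_relParam h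

theorem relParamQuot_injective [IsDomain R] : Function.Injective (relParamQuot R) :=
  RingHom.lift_injective_of_ker_le_ideal _ _ ker_relParam.le

end

theorem MvPolynomial.exists_isUnit_eq_algebraMap_of_injective {R A σ : Type*} [CommRing R]
    [IsReduced R] [CommRing A] [Algebra R A] {φ : A →ₐ[R] MvPolynomial σ R}
    (hφ : Function.Injective φ) {x : A} (hx : IsUnit x) :
    ∃ r, IsUnit r ∧ x = algebraMap R A r := by
  obtain ⟨r, hr, h⟩ := isUnit_iff_eq_C_of_isReduced.mp (hx.map φ)
  exact ⟨r, hr, hφ (by rw [h, AlgHom.commutes, algebraMap_eq])⟩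

/-- for a field `K` and `K̄ = K[a,b,c,d]/(ab+cd-1)`, the units of `K̄` are exactly
the images of the nonzero elements of `K` under the canonical map `K → K̄`. -/
theorem units_of_Kbar (K : Type*) [Field K]
    (x : MvPolynomial (Fin 4) K ⧸ relIdeal K) :
    IsUnit x ↔ ∃ k : K, k ≠ 0 ∧ x = algebraMap K (MvPolynomial (Fin 4) K ⧸ relIdeal K) k := by
  constructor
  · intro hx
    obtain ⟨k, hk, rfl⟩ := exists_isUnit_eq_algebraMap_of_injective relParamQuot_injective hx
    exact ⟨k, hk.ne_zero, rfl⟩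
  · rintro ⟨k, hk, rfl⟩
    exact (IsUnit.mk0 k hk).map _
end
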